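/- There exist constants C, d > 0 such that for all integers n ≥ 2, all even integers m ≥ 2, and every j ∈ [m], there is a deterministic decision tree T_j over Σ^M with max_x C(T_j, x) ≤ C·(n+m)·(log₂(n+m))^d which, on every input x ∈ Σ^M, outputs 1 if and only if g_{n,m}(x) = 1 and column j is good in x (i.e., j belongs to the set G of condition (4′)). -/

import Mathlib

open Classical
open scoped ENNReal

set_option maxHeartbeats 1000000

/-! ### Deterministic decision trees -/

inductive DTree (ι σ : Type) : Type
  | leaf (b : Bool) : DTree ι σ
  | node (v : ι) (child : σ → DTree ι σ) : DTree ι σ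

namespace DTree

variable {ι σ : Type}

/-- The output of the decision tree on input `x`. -/
def eval (x : ι → σ) : DTree ι σ → Bool
  | leaf b => b
  | node v child => (child (x v)).eval x

/-- The list of variables queried by the decision tree on input `x`,
in the order they are queried. -/
def queryList (x : ι → σ) : DTree ι σ → List ι
  | leaf _ => []
  | node v child => v :: (child (x v)).queryList x

/-- The cost of the decision tree on input `x`: the number of internal nodes visited. -/
def cost (T : DTree ι σ) (x : ι → σ) : ℕ := (T.queryList x).length

/-- `T` computes `f` if it outputs `f x` on every input `x`. -/
def Computes (T : DTree ι σ) (f : (ι → σ) → Bool) : Prop := ∀ x, T.eval x = f x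

end DTree

/-- Deterministic query complexity. -/
noncomputable def detComplexity {ι σ : Type} (f : (ι → σ) → Bool) : ℕ :=
  sInf {d : ℕ | ∃ T : DTree ι σ, T.Computes f ∧ ∀ x, T.cost x ≤ d}

/-- Expected cost of a randomized decision tree (a distribution over deterministic
decision trees) on input `x`. -/
noncomputable def expCost {ι σ : Type} (μ : PMF (DTree ι σ)) (x : ι → σ) : ℝ≥0∞ :=
  ∑' T : DTree ι σ, μ T * (T.cost x : ℝ≥0∞)

/-- Zero-error (Las Vegas) randomized query complexity. -/
noncomputable def R0query {ι σ : Type} (f : (ι → σ) → Bool) : ℝ≥0∞ :=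
  ⨅ μ ∈ {μ : PMF (DTree ι σ) | ∀ T ∈ μ.support, T.Computes f},
    ⨆ x : ι → σ, expCost μ x

/-- One-sided error randomized query complexity. -/
noncomputable def R1query {ι σ : Type} (f : (ι → σ) → Bool) : ℝ≥0∞ :=
  ⨅ μ ∈ {μ : PMF (DTree ι σ) |
      (∀ x, f x = false → ∀ T ∈ μ.support, T.eval x = false) ∧
      (∀ x, f x = true → 1 / 2 ≤ ∑' T : DTree ι σ, if T.eval x = true then μ T else 0)},
    ⨆ x : ι → σ, expCost μ x

/-- Bounded-error (Monte Carlo) randomized query complexity. -/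
noncomputable def Rquery {ι σ : Type} (f : (ι → σ) → Bool) : ℝ≥0∞ :=
  ⨅ μ ∈ {μ : PMF (DTree ι σ) |
      ∀ x, 9 / 10 ≤ ∑' T : DTree ι σ, if T.eval x = f x then μ T else 0},
    ⨆ x : ι → σ, expCost μ x
/-! ### Quantum query algorithms -/

/-- The standard quantum query oracle `O_x |j,p⟩|w⟩ = |j, p + x_j mod S⟩|w⟩`,
as a matrix. -/
noncomputable def qOracle {V ω : Type} [DecidableEq V] [DecidableEq ω] {S : ℕ}
    (x : V → Fin S) : Matrix (V × Fin S × ω) (V × Fin S × ω) ℂ :=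
  fun r c => if r = (c.1, c.2.1 + x c.1, c.2.2) then 1 else 0

/-- A quantum query algorithm on inputs `x : V → Fin S`, making `queries` queries, with
workspace `Fin (W+1)`, alternating the unitaries `U 0, …, U queries` with the oracle,
and measuring with the projector `P` at the end. -/
structure QAlg (V : Type) [Fintype V] [DecidableEq V] (S : ℕ) [NeZero S] where
  queries : ℕ
  W : ℕ
  init : V
  U : ℕ → Matrix (V × Fin S × Fin (W + 1)) (V × Fin S × Fin (W + 1)) ℂ
  hU : ∀ t, (U t).conjTranspose * U t = 1 ∧ U t * (U t).conjTranspose = 1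
  P : Matrix (V × Fin S × Fin (W + 1)) (V × Fin S × Fin (W + 1)) ℂ
  hP : P.conjTranspose = P ∧ P * P = P

namespace QAlg

variable {V : Type} [Fintype V] [DecidableEq V] {S : ℕ} [NeZero S]

/-- The state of the quantum algorithm after `t` steps on input `x`. -/
noncomputable def state (A : QAlg V S) (x : V → Fin S) :
    ℕ → (V × Fin S × Fin (A.W + 1) → ℂ)
  | 0 => (A.U 0).mulVec fun r => if r = (A.init, 0, 0) then 1 else 0
  | t + 1 => (A.U (t + 1)).mulVec ((qOracle x).mulVec (A.state x t))

/-- The probability that the algorithm accepts input `x`: `‖P |Ψ_x⟩‖²`. -/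
noncomputable def acceptProb (A : QAlg V S) (x : V → Fin S) : ℝ :=
  ∑ r : V × Fin S × Fin (A.W + 1), Complex.normSq (A.P.mulVec (A.state x A.queries) r)

end QAlg

/-- Bounded-error quantum query complexity (for functions over a finite input
alphabet `σ`, identified with `Fin (card σ)` via a fixed bijection). -/
noncomputable def Qquery {V σ : Type} [Fintype V] [DecidableEq V] [Fintype σ] [Nonempty σ]
    (f : (V → σ) → Bool) : ℕ :=
  letI : NeZero (Fintype.card σ) := ⟨Fintype.card_ne_zero⟩
  sInf {t : ℕ | ∃ A : QAlg V (Fintype.card σ), A.queries = t ∧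
    ∀ x : V → σ,
      (f x = true → 9 / 10 ≤ A.acceptProb fun j => Fintype.equivFin σ (x j)) ∧
      (f x = false → A.acceptProb (fun j => Fintype.equivFin σ (x j)) ≤ 1 / 10)}

/-- Exact quantum query complexity. -/
noncomputable def QEquery {V σ : Type} [Fintype V] [DecidableEq V] [Fintype σ] [Nonempty σ]
    (f : (V → σ) → Bool) : ℕ :=
  letI : NeZero (Fintype.card σ) := ⟨Fintype.card_ne_zero⟩
  sInf {t : ℕ | ∃ A : QAlg V (Fintype.card σ), A.queries = t ∧
    ∀ x : V → σ,
      (f x = true → A.acceptProb (fun j => Fintype.equivFin σ (x j)) = 1) ∧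
      (f x = false → A.acceptProb (fun j => Fintype.equivFin σ (x j)) = 0)}

/-- Approximate degree of a boolean function. -/
noncomputable def adeg {ι : Type} (F : (ι → Bool) → Bool) : ℕ :=
  sInf {d : ℕ | ∃ p : MvPolynomial ι ℝ, p.totalDegree ≤ d ∧
    ∀ y : ι → Bool, |MvPolynomial.eval (fun i => if y i then (1 : ℝ) else 0) p -
      (if F y then 1 else 0)| ≤ 1 / 10}
/-! ### The pointer functions of Göös–Pitassi–Watson type -/

/-- A symbol of the input alphabet: a boolean value, a left pointer, a right pointer,
and a back/internal pointer (to a cell or a column, depending on `β`). -/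
structure PSym (n m : ℕ) (β : Type) where
  val : Bool
  lp : Option (Fin n × Fin m)
  rp : Option (Fin n × Fin m)
  bp : Option β
deriving DecidableEq

/-- The all-ones symbol `(1,⊥,⊥,⊥)`. -/
def PSym.one (n m : ℕ) (β : Type) : PSym n m β := ⟨true, none, none, none⟩

/-- The symbol `(0,⊥,⊥,⊥)`. -/
def PSym.zero (n m : ℕ) (β : Type) : PSym n m β := ⟨false, none, none, none⟩

def PSym.equivProd (n m : ℕ) (β : Type) :
    PSym n m β ≃ Bool × Option (Fin n × Fin m) × Option (Fin n × Fin m) × Option β where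
  toFun v := (v.val, v.lp, v.rp, v.bp)
  invFun p := ⟨p.1, p.2.1, p.2.2.1, p.2.2.2⟩
  left_inv _ := rfl
  right_inv _ := rfl

instance {n m : ℕ} {β : Type} [Fintype β] : Fintype (PSym n m β) :=
  Fintype.ofEquiv _ (PSym.equivProd n m β).symm

instance {n m : ℕ} {β : Type} : Nonempty (PSym n m β) := ⟨PSym.one n m β⟩

/-- The sequence of k bits of `j`, most significant first:  the root-to-leaf path
(`false` = left, `true` = right) of the `j`-th leaf in the complete binary tree of depth `k`. -/
def bitsPath (k j : ℕ) : List Bool :=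
  ((List.range k).reverse).map fun i => j.testBit i

/-- The root-to-leaf path of the leaf labeled `j` (0-indexed) in the balanced binary tree
with `m` leaves: the complete binary tree if `m` is a power of 2, and otherwise the complete
binary tree on `2 ^ ⌊log₂ m⌋` leaves with a pair of children added to each of the
`m - 2 ^ ⌊log₂ m⌋` leftmost leaves. -/
def treePath (m j : ℕ) : List Bool :=
  if m - 2 ^ Nat.log 2 m = 0 then bitsPath (Nat.log 2 m) j
  else if j < 2 * (m - 2 ^ Nat.log 2 m) then
    bitsPath (Nat.log 2 m) (j / 2) ++ [j % 2 == 1]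
  else bitsPath (Nat.log 2 m) (j - (m - 2 ^ Nat.log 2 m))

/-- Starting at cell `a` and following the left/right pointers of `x` as prescribed by the
list `p` of moves (`false` = left pointer, `true` = right pointer); returns `none` if a
null pointer is encountered. -/
def followPath {n m : ℕ} {β : Type} (x : Fin n × Fin m → PSym n m β)
    (a : Fin n × Fin m) (p : List Bool) : Option (Fin n × Fin m) :=
  p.foldl (fun acc b => acc.bind fun c => if b then (x c).rp else (x c).lp) (some a)

/-- The conditions for `x` to be a 1-input of `f_{n,m}`, with marked column `b` and special
element `a`: (1) `b` is the unique all-1 column; (2) `a` is the unique cell of column `b`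
with `x_a ≠ (1,⊥,⊥,⊥)`; (3) for every column `j ≠ b` the tree path from `a` to the leaf
labeled `j` exists, and ends at a cell `ℓ_j` of column `j` holding a 0; (4) the back pointer
of each `ℓ_j` points to the column `b`. -/
def fCond (n m : ℕ) (x : Fin n × Fin m → PSym n m (Fin m))
    (b : Fin m) (a : Fin n × Fin m) : Prop :=
  (∀ j : Fin m, (∀ i : Fin n, (x (i, j)).val = true) ↔ j = b) ∧
  a.2 = b ∧
  (∀ i : Fin n, x (i, b) ≠ PSym.one n m (Fin m) ↔ (i, b) = a) ∧
  ∀ j : Fin m, j ≠ b →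
    ∃ ℓ : Fin n × Fin m, followPath x a (treePath m j.1) = some ℓ ∧
      ℓ.2 = j ∧ (x ℓ).val = false ∧ (x ℓ).bp = some b

/-- The pointer function `f_{n,m}`, with back pointers to the marked column. -/
noncomputable def fFun (n m : ℕ) (x : Fin n × Fin m → PSym n m (Fin m)) : Bool :=
  if ∃ b a, fCond n m x b a then true else false

/-- The conditions for `x` to be a 1-input of `g_{n,m}`, with marked column `b` and special
element `a`: (1)–(3) as for `f_{n,m}`, and (4′) the set of columns `j ≠ b` whose highlighted
zero `ℓ_j` has back pointer to `a` has size exactly `m/2`. -/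
def gCond (n m : ℕ) (x : Fin n × Fin m → PSym n m (Fin n × Fin m))
    (b : Fin m) (a : Fin n × Fin m) : Prop :=
  (∀ j : Fin m, (∀ i : Fin n, (x (i, j)).val = true) ↔ j = b) ∧
  a.2 = b ∧
  (∀ i : Fin n, x (i, b) ≠ PSym.one n m (Fin n × Fin m) ↔ (i, b) = a) ∧
  (∀ j : Fin m, j ≠ b →
    ∃ ℓ : Fin n × Fin m, followPath x a (treePath m j.1) = some ℓ ∧
      ℓ.2 = j ∧ (x ℓ).val = false) ∧
  {j : Fin m | j ≠ b ∧ ∃ ℓ : Fin n × Fin m,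
      followPath x a (treePath m j.1) = some ℓ ∧ (x ℓ).bp = some a}.ncard = m / 2

/-- The pointer function `g_{n,m}`, where exactly `m/2` of the highlighted zeroes point
back to the special element. -/
noncomputable def gFun (n m : ℕ) (x : Fin n × Fin m → PSym n m (Fin n × Fin m)) : Bool :=
  if ∃ b a, gCond n m x b a then true else false

/-- Column `j` is good in `x` (for `g_{n,m}`): `x` is a 1-input with marked column `b ≠ j`
and special element `a`, and the highlighted zero of column `j` points back to `a`. -/
def goodColumn (n m : ℕ) (x : Fin n × Fin m → PSym n m (Fin n × Fin m)) (j : Fin m) : Prop :=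
  ∃ b a, gCond n m x b a ∧ j ≠ b ∧
    ∃ ℓ : Fin n × Fin m, followPath x a (treePath m j.1) = some ℓ ∧ (x ℓ).bp = some a

/-- The conditions for `x` to be a 1-input of `h_{k,n,m}`, with marked columns `b 0,…,b (k-1)`
and special elements `a 0,…,a (k-1)`: (1) the `b s` are exactly the all-1 columns; (2) `a s` is
the unique cell of column `b s` with `x_{a s} ≠ (1,⊥,⊥,⊥)`; (3) the internal pointers of the
`a s` form a cycle and all the `a s` have equal left pointers and equal right pointers;
(4) for every non-marked column `j` the tree path from any `a s` to the leaf labeled `j`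
exists and ends at a cell `ℓ_j` of column `j` holding a 0. -/
def hCond (k n m : ℕ) (x : Fin n × Fin m → PSym n m (Fin n × Fin m))
    (b : Fin k → Fin m) (a : Fin k → Fin n × Fin m) : Prop :=
  Function.Injective b ∧
  (∀ j : Fin m, (∀ i : Fin n, (x (i, j)).val = true) ↔ ∃ s, b s = j) ∧
  (∀ s, (a s).2 = b s) ∧
  (∀ s, ∀ i : Fin n, x (i, b s) ≠ PSym.one n m (Fin n × Fin m) ↔ (i, b s) = a s) ∧
  (∀ s : Fin k, (x (a s)).bp = some (a ⟨(s.1 + 1) % k, Nat.mod_lt _ s.pos⟩)) ∧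
  (∀ s t : Fin k, (x (a s)).lp = (x (a t)).lp ∧ (x (a s)).rp = (x (a t)).rp) ∧
  ∀ j : Fin m, (∀ s, b s ≠ j) → ∀ s : Fin k,
    ∃ ℓ : Fin n × Fin m, followPath x (a s) (treePath m j.1) = some ℓ ∧
      ℓ.2 = j ∧ (x ℓ).val = false

/-- The pointer function `h_{k,n,m}` with `k` marked columns and no back pointers. -/
noncomputable def hFun (k n m : ℕ) (x : Fin n × Fin m → PSym n m (Fin n × Fin m)) : Bool :=
  if ∃ b a, hCond k n m x b a then true else false

/-- The hard input `x^ℓ`: cell `(i,j)` holds `(0,⊥,⊥,⊥)` if `i = ℓ j` and `(1,⊥,⊥,⊥)`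
otherwise. -/
def xhard (n m : ℕ) (β : Type) (ℓ : Fin m → Fin n) : Fin n × Fin m → PSym n m β :=
  fun c => if c.1 = ℓ c.2 then PSym.zero n m β else PSym.one n m β

/-- The set of (distinct) cells queried among the first `t` queries of `T` on input `x`. -/
def queriedUpTo {ι σ : Type} [DecidableEq ι] (T : DTree ι σ) (x : ι → σ) (t : ℕ) :
    Finset ι :=
  ((T.queryList x).take t).toFinset
/-! ### The progress measure for the hard distribution `x^ℓ` -/

/-- Column `j` is compromised (for the input `x^ℓ`), given the set `Q` of queried cells:
the zero cell `(ℓ j, j)` has been queried, or more than `n/2` cells of column `j` have been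
queried. -/
def compromisedCol (n m : ℕ) (ℓ : Fin m → Fin n) (Q : Finset (Fin n × Fin m))
    (j : Fin m) : Prop :=
  (ℓ j, j) ∈ Q ∨ n < 2 * (Q.filter fun c => c.2 = j).card

/-- The progress measure `I_t = A_t + (2/n)·B_t` of the decision tree `T` on the input `x^ℓ`
after `t` queries, where `A_t` is the number of compromised columns and `B_t` is the number
of queried cells lying outside compromised columns. -/
noncomputable def Imeasure (n m : ℕ)
    (T : DTree (Fin n × Fin m) (PSym n m (Fin n × Fin m))) (ℓ : Fin m → Fin n) (t : ℕ) : ℝ :=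
  ({j : Fin m |
      compromisedCol n m ℓ (queriedUpTo T (xhard n m (Fin n × Fin m) ℓ) t) j}.ncard : ℝ) +
    (2 / n) * ({c : Fin n × Fin m | c ∈ queriedUpTo T (xhard n m (Fin n × Fin m) ℓ) t ∧
      ¬ compromisedCol n m ℓ (queriedUpTo T (xhard n m (Fin n × Fin m) ℓ) t) c.2}.ncard : ℝ)
/-! ### The balanced binary tree, via root-to-node paths -/

/-- The node set of the balanced binary tree with `m` leaves: each node is identified with
the left/right path from the root to it, so the nodes are exactly the prefixes of the
root-to-leaf paths. -/
def treeNodes (m : ℕ) : Finset (List Bool) :=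
  (Finset.range m).biUnion fun j => (treePath m j).inits.toFinset

/-- The leaves of the balanced binary tree with `m` leaves. -/
def leafNodes (m : ℕ) : Finset (List Bool) :=
  (Finset.range m).image fun j => treePath m j

/-- The internal nodes of the balanced binary tree with `m` leaves. -/
def internalNodes (m : ℕ) : Finset (List Bool) :=
  treeNodes m \ leafNodes m

/-- The subtree rooted at a node `u`: all nodes of which `u` is a prefix. -/
def subtreeOf (m : ℕ) (u : List Bool) : Finset (List Bool) :=
  (treeNodes m).filter fun w => u <+: w

/-! ### The hard distribution for `h_{1,n,m}` -/

/-- A parameter quadruple `(v, π, ℓᴸ, ℓᴺ)` for the hard distribution: a bit `v`, a map `π`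
from internal tree nodes to columns, and row maps `ℓᴸ, ℓᴺ` for leaves resp. internal nodes. -/
abbrev HardQ (n m : ℕ) : Type :=
  Bool × ({u : List Bool // u ∈ internalNodes m} → Fin m) × (Fin m → Fin n) × (Fin m → Fin n)

/-- The valid parameter quadruples: `π` injective and `ℓᴸ j ≠ ℓᴺ j` for all `j`. -/
noncomputable def hardSet (n m : ℕ) : Finset (HardQ n m) :=
  Finset.univ.filter fun q => Function.Injective q.2.1 ∧ ∀ j, q.2.2.1 j ≠ q.2.2.2 j

/-- The column of the root of the tree (`none` if the tree has no internal node). -/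
noncomputable def rootCol (n m : ℕ) (q : HardQ n m) : Option (Fin m) :=
  if h : ([] : List Bool) ∈ internalNodes m then some (q.2.1 ⟨[], h⟩) else none

/-- The cell where a child node `w` of an internal node is placed: internal nodes go to
cell `(ℓᴺ (π w), π w)`, the leaf labeled `j` goes to cell `(ℓᴸ j, j)`, and the removed leaf
(the one labeled by the root's column) yields a null pointer. -/
noncomputable def childCell (n m : ℕ) (q : HardQ n m) (w : List Bool) :
    Option (Fin n × Fin m) :=
  if h : w ∈ internalNodes m then some (q.2.2.2 (q.2.1 ⟨w, h⟩), q.2.1 ⟨w, h⟩)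
  else if h2 : ∃ j : Fin m, w = treePath m j.1 ∧ some j ≠ rootCol n m q then
    some (q.2.2.1 (Classical.choose h2), Classical.choose h2)
  else none

/-- The input of the hard distribution determined by the parameter quadruple `q`:
the internal node `u` of the tree is placed at cell `(ℓᴺ (π u), π u)` with left and right
pointers to the cells of its children, value `v` and a self-loop internal pointer if `u` is
the root, and value 0 otherwise; for `j ≠ π(root)`, the leaf labeled `j` is placed at cell
`(ℓᴸ j, j)` with value 0 and null pointers; all the remaining cells hold `(1,⊥,⊥,⊥)`. -/
noncomputable def hardInput (n m : ℕ) (q : HardQ n m) :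
    Fin n × Fin m → PSym n m (Fin n × Fin m) :=
  fun c =>
    if h : ∃ u : {u : List Bool // u ∈ internalNodes m}, q.2.1 u = c.2 ∧ q.2.2.2 c.2 = c.1 then
      { val := if (Classical.choose h).1 = [] then q.1 else false
        lp := childCell n m q ((Classical.choose h).1 ++ [false])
        rp := childCell n m q ((Classical.choose h).1 ++ [true])
        bp := if (Classical.choose h).1 = [] then some c else none }
    else if some c.2 ≠ rootCol n m q ∧ c.1 = q.2.2.1 c.2 then PSym.zero n m (Fin n × Fin m)
    else PSym.one n m (Fin n × Fin m)

/-- Column `j` directly satisfies (i) or (ii): one of the cells `(ℓᴸ j, j)`, `(ℓᴺ j, j)` has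
been queried, or more than half of the cells of column `j` have been queried. -/
def colBad (n m : ℕ) (q : HardQ n m) (Q : Finset (Fin n × Fin m)) (j : Fin m) : Prop :=
  (q.2.2.1 j, j) ∈ Q ∨ (q.2.2.2 j, j) ∈ Q ∨ n < 2 * (Q.filter fun c => c.2 = j).card

/-- Column `j` is compromised: it satisfies (i) or (ii), or some ancestor `u` of `π⁻¹(j)`
in the tree is such that column `π u` satisfies (i) or (ii). -/
def compromisedCol19 (n m : ℕ) (q : HardQ n m) (Q : Finset (Fin n × Fin m))
    (j : Fin m) : Prop :=
  colBad n m q Q j ∨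
  ∃ w u : {u : List Bool // u ∈ internalNodes m}, q.2.1 w = j ∧
    u.1 <+: w.1 ∧ u.1 ≠ w.1 ∧ colBad n m q Q (q.2.1 u)

/-- The progress measure `I_t = min{A_t + (4·C0·log₂ m / n)·B_t, m/2}` of the decision tree
`D` on the hard-distribution input given by `q` after `t` queries, where `A_t` is the number
of compromised columns and `B_t` the number of queried cells outside compromised columns. -/
noncomputable def Imeasure19 (n m : ℕ) (C0 : ℝ)
    (D : DTree (Fin n × Fin m) (PSym n m (Fin n × Fin m))) (q : HardQ n m) (t : ℕ) : ℝ :=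
  min
    (({j : Fin m | compromisedCol19 n m q (queriedUpTo D (hardInput n m q) t) j}.ncard : ℝ) +
      (4 * C0 * Real.logb 2 m / n) *
        ({c : Fin n × Fin m | c ∈ queriedUpTo D (hardInput n m q) t ∧
          ¬ compromisedCol19 n m q (queriedUpTo D (hardInput n m q) t) c.2}.ncard : ℝ))
    (m / 2)

/-! Reading column `j` gives, through the back pointers of its cells, at most `n` candidates
for the special element `a`, and `a` is among them whenever `j` is good. A tournament of duels
singles out `a`: as champion it wins because its column is all `1` while `x_a ≠ (1,⊥,⊥,⊥)`, and as
challenger because its tree path to any other column ends at a `0` there, whereas every other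
cell of its column holds `(1,⊥,⊥,⊥)`. Reading the column of the winner and its `m` tree paths
costs `O((n + m) log m)` queries, and when `j` is good these answers certify it: every input
agreeing with `x` on them is again a 1-input in which `j` is good. The decision tree runs this
search and accepts iff the answers it has seen force `goodColumn · j`. -/

/-- Decision trees with leaves labeled in `α`; they form a monad, so that query algorithms can be
written in `do` notation. -/
inductive Prog (ι σ α : Type) : Type
  | ret (a : α) : Prog ι σ α
  | ask (v : ι) (k : σ → Prog ι σ α) : Prog ι σ α

namespace Prog

variable {ι σ α β : Type}

def bind : Prog ι σ α → (α → Prog ι σ β) → Prog ι σ β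
  | ret a, f => f a
  | ask v k, f => ask v fun s => (k s).bind f

instance : Monad (Prog ι σ) where
  pure := ret
  bind := bind

theorem bind_pure (p : Prog ι σ α) : p >>= pure = p := by
  induction p with
  | ret a => rfl
  | ask v k ih => exact congrArg (ask v) (funext ih)

theorem bind_assoc {γ : Type} (p : Prog ι σ α) (f : α → Prog ι σ β) (g : β → Prog ι σ γ) :
    p >>= f >>= g = p >>= fun a => f a >>= g := by
  induction p with
  | ret a => rfl
  | ask v k ih => exact congrArg (ask v) (funext ih)

instance : LawfulMonad (Prog ι σ) :=
  LawfulMonad.mk' _ (fun p => bind_pure p) (fun _ _ => rfl) bind_assoc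

def query (v : ι) : Prog ι σ σ := ask v pure

def run (x : ι → σ) : Prog ι σ α → α
  | ret a => a
  | ask v k => (k (x v)).run x

def queries (x : ι → σ) : Prog ι σ α → List ι
  | ret _ => []
  | ask v k => v :: (k (x v)).queries x

variable (x : ι → σ)

@[simp] theorem run_pure (a : α) : (pure a : Prog ι σ α).run x = a := rfl

@[simp] theorem queries_pure (a : α) : (pure a : Prog ι σ α).queries x = [] := rfl

@[simp] theorem run_query (v : ι) : (query v : Prog ι σ σ).run x = x v := rfl

@[simp] theorem queries_query (v : ι) : (query v : Prog ι σ σ).queries x = [v] := rfl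

@[simp] theorem run_bind (p : Prog ι σ α) (f : α → Prog ι σ β) :
    (p >>= f).run x = (f (p.run x)).run x := by
  induction p with
  | ret a => rfl
  | ask v k ih => exact ih (x v)

@[simp] theorem queries_bind (p : Prog ι σ α) (f : α → Prog ι σ β) :
    (p >>= f).queries x = p.queries x ++ (f (p.run x)).queries x := by
  induction p with
  | ret a => rfl
  | ask v k ih => exact congrArg (v :: ·) (ih (x v))

@[simp] theorem run_map (p : Prog ι σ α) (f : α → β) : (f <$> p).run x = f (p.run x) := by
  simp [map_eq_bind_pure_comp]

@[simp] theorem queries_map (p : Prog ι σ α) (f : α → β) :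
    (f <$> p).queries x = p.queries x := by
  simp [map_eq_bind_pure_comp]

@[simp] theorem run_mapM {γ : Type} (f : γ → Prog ι σ α) (l : List γ) :
    (l.mapM f).run x = l.map fun c => (f c).run x := by
  induction l with
  | nil => rfl
  | cons c l ih => simp [ih]

@[simp] theorem queries_mapM {γ : Type} (f : γ → Prog ι σ α) (l : List γ) :
    (l.mapM f).queries x = l.flatMap fun c => (f c).queries x := by
  induction l with
  | nil => rfl
  | cons c l ih => simp [ih]

theorem length_queries_mapM_le {γ : Type} {f : γ → Prog ι σ α} {K : ℕ}
    (hf : ∀ c, ((f c).queries x).length ≤ K) (l : List γ) :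
    ((l.mapM f).queries x).length ≤ l.length * K := by
  rw [queries_mapM, List.length_flatMap]
  simpa using List.sum_le_card_nsmul (l.map fun c => ((f c).queries x).length) K
    (by simpa using fun c _ => hf c)

theorem run_foldlM {γ : Type} (f : α → γ → Prog ι σ α) (l : List γ) (init : α) :
    (l.foldlM f init).run x = l.foldl (fun a c => (f a c).run x) init := by
  induction l generalizing init with
  | nil => rfl
  | cons c l ih => simp [ih]

theorem length_queries_foldlM_le {γ : Type} {f : α → γ → Prog ι σ α} {K : ℕ}
    (hf : ∀ a c, ((f a c).queries x).length ≤ K) (l : List γ) (init : α) :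
    ((l.foldlM f init).queries x).length ≤ l.length * K := by
  induction l generalizing init with
  | nil => simp
  | cons c l ih =>
    simp only [List.foldlM_cons, queries_bind, List.length_append, List.length_cons]
    linarith [hf init c, ih ((f init c).run x)]

theorem run_eq_of_agree {x y : ι → σ} (p : Prog ι σ α) (h : ∀ v ∈ p.queries x, y v = x v) :
    p.run y = p.run x := by
  induction p with
  | ret a => rfl
  | ask v k ih =>
    simp only [queries, List.mem_cons, forall_eq_or_imp] at h
    simp only [run, h.1]
    exact ih _ h.2

noncomputable def certify (P : (ι → σ) → Prop) : Prog ι σ α → List (ι × σ) → DTree ι σ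
  | ret _, seen => .leaf (decide (∀ y : ι → σ, (∀ q ∈ seen, y q.1 = q.2) → P y))
  | ask v k, seen => .node v fun s => (k s).certify P ((v, s) :: seen)

theorem eval_certify (P : (ι → σ) → Prop) (p : Prog ι σ α) (seen : List (ι × σ)) :
    (p.certify P seen).eval x =
      decide (∀ y, (∀ q ∈ seen, y q.1 = q.2) → (∀ v ∈ p.queries x, y v = x v) → P y) := by
  induction p generalizing seen with
  | ret a => simp [certify, DTree.eval, queries]
  | ask v k ih =>
    simp only [certify, DTree.eval, ih, queries, List.mem_cons, forall_eq_or_imp]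
    grind

theorem cost_certify (P : (ι → σ) → Prop) (p : Prog ι σ α) (seen : List (ι × σ)) :
    (p.certify P seen).cost x = (p.queries x).length := by
  induction p generalizing seen with
  | ret a => rfl
  | ask v k ih => simpa [DTree.cost, DTree.queryList, certify, queries] using ih (x v) _

theorem certify_eval_eq_true_iff {P : (ι → σ) → Prop} {p : Prog ι σ α}
    (hP : P x → ∀ y, (∀ v ∈ p.queries x, y v = x v) → P y) :
    (p.certify P []).eval x = true ↔ P x := by
  simp only [eval_certify, List.not_mem_nil, decide_eq_true_eq]
  exact ⟨fun h => h x (by simp) (by simp), fun h y _ => hP h y⟩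

end Prog

theorem List.foldl_eq_of_absorbing {α : Type*} {f : α → α → α} {a : α}
    (hleft : ∀ c, f a c = a) (hright : ∀ c, f c a = a) :
    ∀ {l : List α} {init : α}, (a = init ∨ a ∈ l) → l.foldl f init = a
  | [], _, h => by simpa [eq_comm] using h
  | c :: l, init, h => by
    rw [List.foldl_cons]
    refine List.foldl_eq_of_absorbing hleft hright ?_
    rcases h with rfl | h
    · exact .inl (hleft c).symm
    · rcases List.mem_cons.mp h with rfl | h
      · exact .inl (hright init).symm
      · exact .inr h

theorem followPath_cons {n m : ℕ} {β : Type} (x : Fin n × Fin m → PSym n m β)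
    (a : Fin n × Fin m) (b : Bool) (p : List Bool) :
    followPath x a (b :: p) = (if b then (x a).rp else (x a).lp).bind (followPath x · p) := by
  have foldl_none (p : List Bool) :
      p.foldl (fun acc b => acc.bind fun c => if b then (x c).rp else (x c).lp) none = none := by
    induction p with
    | nil => rfl
    | cons b p ih => simpa using ih
  cases h : (if b then (x a).rp else (x a).lp) <;> simp_all [followPath]

theorem treePath_length_le (m k : ℕ) : (treePath m k).length ≤ Nat.log 2 m + 1 := by
  unfold treePath bitsPath
  split_ifs <;> simp

namespace GoodColumnSearch

open Prog

abbrev Cell (n m : ℕ) : Type := Fin n × Fin m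
abbrev Sym (n m : ℕ) : Type := PSym n m (Cell n m)
abbrev Query (n m : ℕ) : Type → Type := Prog (Cell n m) (Sym n m)

variable {n m : ℕ}

def walk : Cell n m → List Bool → Query n m (Option (Cell n m))
  | a, [] => pure (some a)
  | a, b :: p => do
    let s ← query a
    match if b then s.rp else s.lp with
    | none => pure none
    | some a' => walk a' p

/-- `c` is the champion and `d` the challenger: a `0` that `d` reaches in column `c.2` shows that
`c.2` is not the marked column. -/
def duel (c d : Cell n m) : Query n m (Cell n m) := do
  let s ← query c
  if s = PSym.one n m (Cell n m) then pure d else do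
    match ← walk d (treePath m c.2) with
    | none => pure c
    | some e => do
      let t ← query e
      pure (if e.2 = c.2 ∧ t.val = false then d else c)

def tournament : List (Cell n m) → Query n m (Option (Cell n m))
  | [] => pure none
  | c :: cs => some <$> cs.foldlM duel c

def readColumn (k : Fin m) : Query n m (List (Sym n m)) :=
  (List.finRange n).mapM fun i => query (i, k)

def probe (a : Cell n m) (k : Fin m) : Query n m (Option (Cell n m × Sym n m)) := do
  let e? ← walk a (treePath m k)
  e?.mapM fun e => Prod.mk e <$> query e

/-- The result is exactly the data on which `gCond · b a` and the goodness of columns depend. -/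
def explore (a : Cell n m) :
    Query n m (List (Sym n m) × List (Option (Cell n m × Sym n m))) := do
  let column ← readColumn a.2
  let leaves ← (List.finRange m).mapM (probe a)
  pure (column, leaves)

def search (j : Fin m) :
    Query n m (Option (List (Sym n m) × List (Option (Cell n m × Sym n m)))) := do
  let column ← readColumn j
  let winner ← tournament (column.filterMap PSym.bp)
  winner.mapM explore

variable (x : Cell n m → Sym n m)

@[simp] theorem run_walk (a : Cell n m) (p : List Bool) :
    (walk a p).run x = followPath x a p := by
  induction p generalizing a with
  | nil => rfl
  | cons b p ih =>
    rw [followPath_cons]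
    cases h : (if b then (x a).rp else (x a).lp) <;> simp [walk, h, ih]

theorem length_queries_walk_le (a : Cell n m) (p : List Bool) :
    ((walk a p).queries x).length ≤ p.length := by
  induction p generalizing a with
  | nil => simp [walk]
  | cons b p ih => cases h : (if b then (x a).rp else (x a).lp) <;> simp [walk, h, ih]

theorem run_duel_self (c : Cell n m) : (duel c c).run x = c := by
  by_cases hc : x c = PSym.one n m (Cell n m)
  · simp [duel, hc]
  · simp only [duel, run_bind, run_query, hc, if_false, run_walk]
    split <;> simp

theorem length_queries_duel_le (c d : Cell n m) :
    ((duel c d).queries x).length ≤ Nat.log 2 m + 3 := by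
  have hwalk := (length_queries_walk_le x d (treePath m c.2)).trans (treePath_length_le m c.2)
  by_cases hc : x c = PSym.one n m (Cell n m)
  · simp [duel, hc]
  · cases h : followPath x d (treePath m c.2) <;> simp [duel, hc, h] <;> omega

theorem length_queries_tournament_le (l : List (Cell n m)) :
    ((tournament l).queries x).length ≤ l.length * (Nat.log 2 m + 3) := by
  cases l with
  | nil => simp [tournament]
  | cons c cs =>
    simp only [tournament, queries_map]
    exact (length_queries_foldlM_le x (length_queries_duel_le x) cs c).trans
      (Nat.mul_le_mul_right _ (by simp))

@[simp] theorem run_readColumn (k : Fin m) :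
    (readColumn k).run x = (List.finRange n).map fun i => x (i, k) := by
  simp [readColumn]

@[simp] theorem length_queries_readColumn (k : Fin m) :
    ((readColumn k).queries x).length = n := by
  simp [readColumn]

@[simp] theorem run_probe (a : Cell n m) (k : Fin m) :
    (probe a k).run x = (followPath x a (treePath m k)).map fun e => (e, x e) := by
  cases h : followPath x a (treePath m k) <;> simp [probe, h]

theorem length_queries_probe_le (a : Cell n m) (k : Fin m) :
    ((probe a k).queries x).length ≤ Nat.log 2 m + 2 := by
  have hwalk := (length_queries_walk_le x a (treePath m k)).trans (treePath_length_le m k)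
  cases h : followPath x a (treePath m k) <;> simp [probe, h] <;> omega

theorem length_queries_explore_le (a : Cell n m) :
    ((explore a).queries x).length ≤ n + m * (Nat.log 2 m + 2) := by
  have := length_queries_mapM_le x (length_queries_probe_le x a) (List.finRange m)
  simp only [explore, queries_bind, queries_pure, List.length_append, length_queries_readColumn,
    List.length_finRange, List.length_nil] at this ⊢
  omega

theorem length_queries_search_le (j : Fin m) :
    ((search j).queries x).length ≤ (n + m) * (Nat.log 2 m + 5) := by
  have hcand : (((readColumn j).run x).filterMap PSym.bp).length ≤ n :=
    (List.length_filterMap_le _ _).trans (by simp)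
  have htour := length_queries_tournament_le x (((readColumn j).run x).filterMap PSym.bp)
  have hexplore (w : Option (Cell n m)) :
      ((w.mapM explore).queries x).length ≤ n + m * (Nat.log 2 m + 2) := by
    cases w with
    | none => simp
    | some a => simpa using length_queries_explore_le x a
  simp only [search, queries_bind, List.length_append, length_queries_readColumn]
  nlinarith [hexplore ((tournament (((readColumn j).run x).filterMap PSym.bp)).run x)]

variable {x} {y : Cell n m → Sym n m} {a : Cell n m}

theorem run_explore_eq_iff :
    (explore a).run y = (explore a).run x ↔ (∀ i : Fin n, y (i, a.2) = x (i, a.2)) ∧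
      ∀ k : Fin m, (followPath y a (treePath m k)).map (fun e => (e, y e)) =
        (followPath x a (treePath m k)).map fun e => (e, x e) := by
  simp [explore, List.map_inj_left]

theorem exists_followPath_iff_of_run_explore_eq (h : (explore a).run y = (explore a).run x)
    (Q : Cell n m → Sym n m → Prop) (k : Fin m) :
    (∃ ℓ, followPath y a (treePath m k) = some ℓ ∧ Q ℓ (y ℓ)) ↔
      ∃ ℓ, followPath x a (treePath m k) = some ℓ ∧ Q ℓ (x ℓ) := by
  have hk := (run_explore_eq_iff.1 h).2 k
  generalize followPath y a (treePath m k) = oy at hk ⊢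
  generalize followPath x a (treePath m k) = ox at hk ⊢
  cases oy <;> cases ox <;>
    simp only [Option.map_none, Option.map_some, reduceCtorEq, Option.some.injEq,
      Prod.mk.injEq] at hk
  · simp
  · obtain ⟨rfl, hval⟩ := hk
    simp [hval]

end GoodColumnSearch

namespace gCond

open GoodColumnSearch Prog

variable {n m : ℕ} {x y : Cell n m → Sym n m} {b : Fin m} {a : Cell n m}

theorem val_eq_true (hg : gCond n m x b a) (i : Fin n) : (x (i, b)).val = true :=
  (hg.1 b).2 rfl i

theorem ne_one (hg : gCond n m x b a) : x a ≠ PSym.one n m (Cell n m) := by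
  obtain ⟨-, hab, hone, -⟩ := hg
  simpa [← hab] using (hone a.1).2 (by rw [← hab])

theorem eq_of_ne_one (hg : gCond n m x b a) {c : Cell n m} (hc : c.2 = b)
    (hne : x c ≠ PSym.one n m (Cell n m)) : c = a := by
  rw [← (hg.2.2.1 c.1).1 (by rwa [← hc]), ← hc]

theorem run_duel_left (hg : gCond n m x b a) (d : Cell n m) : (duel a d).run x = a := by
  have hcol : ∀ e : Cell n m, e.2 = a.2 → (x e).val = true := by
    rintro ⟨i, k⟩ rfl
    simpa [hg.2.1] using hg.val_eq_true i
  rcases h : followPath x d (treePath m a.2) with _ | e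
  · simp [duel, hg.ne_one, h]
  simp only [duel, bind_pure_comp, run_bind, run_query, hg.ne_one, ↓reduceIte, run_walk, h, run_map]
  exact if_neg fun ⟨he, hv⟩ => by simp [hcol e he] at hv

theorem run_duel_right (hg : gCond n m x b a) (c : Cell n m) : (duel c a).run x = a := by
  by_cases hc : x c = PSym.one n m (Cell n m)
  · simp [duel, hc]
  by_cases hcb : c.2 = b
  · obtain rfl := hg.eq_of_ne_one hcb hc
    exact run_duel_self x c
  obtain ⟨ℓ, hℓ, hℓc, hℓv⟩ := hg.2.2.2.1 c.2 hcb
  simp [duel, hc, hℓ, hℓc, hℓv]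

theorem run_tournament (hg : gCond n m x b a) {l : List (Cell n m)} (ha : a ∈ l) :
    (tournament l).run x = some a := by
  cases l with
  | nil => simp at ha
  | cons c cs =>
    simp only [tournament, run_map, run_foldlM, Option.some.injEq]
    exact List.foldl_eq_of_absorbing hg.run_duel_left hg.run_duel_right
      (by simpa [eq_comm] using ha)

theorem of_run_explore_eq (hg : gCond n m x b a) (h : (explore a).run y = (explore a).run x) :
    gCond n m y b a := by
  obtain ⟨hmarked, hab, hspecial, hpaths, hgood⟩ := hg
  have hcol (i : Fin n) : y (i, b) = x (i, b) := hab ▸ (run_explore_eq_iff.1 h).1 i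
  have hpaths' (k : Fin m) (hk : k ≠ b) :
      ∃ ℓ, followPath y a (treePath m k) = some ℓ ∧ ℓ.2 = k ∧ (y ℓ).val = false :=
    (exists_followPath_iff_of_run_explore_eq h (fun ℓ s => ℓ.2 = k ∧ s.val = false) k).2
      (hpaths k hk)
  refine ⟨fun k => ⟨fun hall => ?_, ?_⟩, hab, by simpa only [hcol] using hspecial, hpaths', ?_⟩
  · by_contra hk
    obtain ⟨⟨i, k'⟩, -, rfl, hval⟩ := hpaths' k hk
    simp [hall i] at hval
  · rintro rfl i
    rw [hcol]
    exact (hmarked k).2 rfl i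
  · rw [← hgood]
    congr 1
    ext k
    exact and_congr_right fun _ =>
      exists_followPath_iff_of_run_explore_eq h (fun _ s => s.bp = some a) k

end gCond

namespace goodColumn

open GoodColumnSearch Prog

variable {n m : ℕ} {x y : Cell n m → Sym n m} {j : Fin m}

theorem gFun_eq_true (h : goodColumn n m x j) : gFun n m x = true := by
  obtain ⟨b, a, hg, -⟩ := h
  simp only [gFun, ite_eq_left_iff, not_exists]
  exact fun hno => absurd hg (hno b a)

theorem of_agree_search (h : goodColumn n m x j) (hy : ∀ v ∈ (search j).queries x, y v = x v) :
    goodColumn n m y j := by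
  obtain ⟨b, a, hg, hjb, ℓ, hℓ, hbp⟩ := h
  have hmem : a ∈ ((readColumn j).run x).filterMap PSym.bp := by
    obtain ⟨ℓ', hℓ', rfl, -⟩ := hg.2.2.2.1 j hjb
    obtain rfl : ℓ' = ℓ := Option.some.inj (hℓ'.symm.trans hℓ)
    simp only [run_readColumn, List.mem_filterMap, List.mem_map, List.mem_finRange, true_and]
    exact ⟨_, ⟨ℓ'.1, rfl⟩, hbp⟩
  have hview : (explore a).run y = (explore a).run x :=
    run_eq_of_agree _ fun v hv => hy v <| by
      simp only [search, queries_bind, List.mem_append, hg.run_tournament hmem, Option.mapM_some,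
        queries_map]
      exact .inr (.inr hv)
  exact ⟨b, a, hg.of_run_explore_eq hview, hjb,
    (exists_followPath_iff_of_run_explore_eq hview (fun _ s => s.bp = some a) j).2 ⟨ℓ, hℓ, hbp⟩⟩

end goodColumn

theorem natLog_add_five_le_four_mul_logb {m N : ℕ} (hmN : m ≤ N) (hN : 4 ≤ N) :
    (Nat.log 2 m : ℝ) + 5 ≤ 4 * Real.logb 2 N := by
  have hlog : (Nat.log 2 m : ℝ) ≤ Real.logb 2 N :=
    (Nat.cast_le.2 (Nat.log_mono_right hmN)).trans (Real.natLog_le_logb N 2)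
  have htwo : 2 ≤ Real.logb 2 N := by
    rw [Real.le_logb_iff_rpow_le (by norm_num) (by positivity)]
    norm_num
    exact_mod_cast hN
  linarith

/-- For every column `j` there is a deterministic decision tree of cost
`Õ(n + m)` which accepts an input `x` iff `g_{n,m}(x) = 1` and column `j` is good in `x`. -/
theorem statement10 :
    ∃ C d : ℝ, 0 < C ∧ 0 < d ∧ ∀ n m : ℕ, 2 ≤ n → 2 ≤ m → Even m → ∀ j : Fin m,
      ∃ T : DTree (Fin n × Fin m) (PSym n m (Fin n × Fin m)),
        (∀ x, (T.cost x : ℝ) ≤ C * ((n : ℝ) + m) * Real.logb 2 ((n : ℝ) + m) ^ d) ∧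
        ∀ x, T.eval x = true ↔ (gFun n m x = true ∧ goodColumn n m x j) := by
  refine ⟨4, 1, by norm_num, by norm_num, fun n m hn hm _ j => ?_⟩
  refine ⟨(GoodColumnSearch.search j).certify (goodColumn n m · j) [], fun x => ?_, fun x => ?_⟩
  · have hlog := natLog_add_five_le_four_mul_logb (Nat.le_add_left m n) (by omega)
    push_cast at hlog
    rw [Prog.cost_certify, Real.rpow_one]
    calc (((GoodColumnSearch.search j).queries x).length : ℝ)
        ≤ (n + m) * (Nat.log 2 m + 5) := by
          exact_mod_cast GoodColumnSearch.length_queries_search_le x j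
      _ ≤ (n + m) * (4 * Real.logb 2 (n + m)) := by gcongr
      _ = 4 * (n + m) * Real.logb 2 (n + m) := by ring
  · rw [Prog.certify_eval_eq_true_iff x fun h _ hy => h.of_agree_search hy]
    exact ⟨fun h => ⟨h.gFun_eq_true, h⟩, And.right⟩
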